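/- arXiv:2503.11996 — 2 statements merged into one kernel-verified Lean document; each statement's English description precedes it below -/
import Mathlib

section
/- Let G be a finite simple graph with no isolated vertex. If there exists a set D ⊆ V such that every minimum ev-dominating set M of G satisfies V_G(M) = D, then D is the unique minimum paired-dominating set of G. -/
open SimpleGraph

variable {V : Type*}

/-- `D` is a dominating set of `G`: every vertex outside `D` has a neighbor in `D`. -/
def IsDomSet (G : SimpleGraph V) (D : Set V) : Prop :=
  ∀ v ∉ D, ∃ u ∈ D, G.Adj u v

/-- The edge `e` ev-dominates the vertex `v`: `e` is incident to `v` or to a neighbor of `v`. -/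
def EvDom (G : SimpleGraph V) (e : Sym2 V) (v : V) : Prop :=
  v ∈ e ∨ ∃ u ∈ e, G.Adj u v

/-- `M` is an edge-vertex dominating set of `G`. -/
def IsEvDomSet (G : SimpleGraph V) (M : Set (Sym2 V)) : Prop :=
  M ⊆ G.edgeSet ∧ ∀ v : V, ∃ e ∈ M, EvDom G e v

/-- `M` is a minimum edge-vertex dominating set of `G`. -/
def IsMinEvDomSet (G : SimpleGraph V) (M : Set (Sym2 V)) : Prop :=
  IsEvDomSet G M ∧ ∀ M' : Set (Sym2 V), IsEvDomSet G M' → M.ncard ≤ M'.ncard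

/-- The edge-vertex domination number `γ_ev(G)`. -/
noncomputable def evNum (G : SimpleGraph V) : ℕ :=
  sInf {n | ∃ M : Set (Sym2 V), IsEvDomSet G M ∧ M.ncard = n}

/-- The set of all endpoints of edges in `M`. -/
def edgeVerts (M : Set (Sym2 V)) : Set V := {v | ∃ e ∈ M, v ∈ e}

/-- `M` is a perfect matching of the induced subgraph `G[D]`: a set of edges of `G`
with all endpoints in `D`, such that every vertex of `D` lies in exactly one edge of `M`. -/
def IsPMOn (G : SimpleGraph V) (D : Set V) (M : Set (Sym2 V)) : Prop :=
  M ⊆ G.edgeSet ∧ (∀ e ∈ M, ∀ v ∈ e, v ∈ D) ∧ ∀ v ∈ D, ∃! e, e ∈ M ∧ v ∈ e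

/-- `D` is a paired-dominating set of `G`. -/
def IsPairedDomSet (G : SimpleGraph V) (D : Set V) : Prop :=
  IsDomSet G D ∧ ∃ M : Set (Sym2 V), IsPMOn G D M

/-- `D` is a minimum paired-dominating set of `G`. -/
def IsMinPairedDomSet (G : SimpleGraph V) (D : Set V) : Prop :=
  IsPairedDomSet G D ∧ ∀ D' : Set V, IsPairedDomSet G D' → D.ncard ≤ D'.ncard

/-- The paired-domination number `γ_pr(G)`. -/
noncomputable def prNum (G : SimpleGraph V) : ℕ :=
  sInf {n | ∃ D : Set V, IsPairedDomSet G D ∧ D.ncard = n}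

/-- No two distinct edges of `M` share a vertex. -/
def NoSharedVertex (M : Set (Sym2 V)) : Prop :=
  ∀ e ∈ M, ∀ f ∈ M, e ≠ f → ∀ v : V, v ∈ e → v ∉ f

/-- `G` has no isolated vertex. -/
def NoIsolated (G : SimpleGraph V) : Prop := ∀ v : V, ∃ u, G.Adj u v

/-!
A minimum ev-dominating set `M` whose vertex set is forced to be `D` must be a matching: if two of
its edges met at `v`, some vertex `x` is ev-dominated only by one of them, `f = vy`; then `x` is a
neighbour of `y` outside `V(M)`, and replacing `f` by `yx` gives another minimum ev-dominating set
whose vertex set contains `x`. An ev-dominating matching spans a paired-dominating set, and the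
pairing of a paired-dominating set is an ev-dominating matching; as `|V(M)| = 2|M|` for a
matching, minimum paired-dominating sets are exactly the vertex sets of minimum ev-dominating
sets, i.e. `D`.
-/

section

variable {G : SimpleGraph V} {M : Set (Sym2 V)} {D : Set V}

lemma EvDom.of_mem_of_mem {e f : Sym2 V} {v x : V} (hve : v ∈ e) (hvf : v ∈ f)
    (hf : f ∈ G.edgeSet) (hxf : x ∈ f) : EvDom G e x := by
  by_cases hxv : x = v
  · exact Or.inl (hxv ▸ hve)
  · have hf_eq : f = s(v, x) := (Sym2.mem_and_mem_iff (Ne.symm hxv)).1 ⟨hvf, hxf⟩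
    exact Or.inr ⟨v, hve, by rwa [hf_eq, SimpleGraph.mem_edgeSet] at hf⟩

lemma EvDom.exists_of_forall_mem {f : Sym2 V} {x : V} {N : Set (Sym2 V)} (hfx : EvDom G f x)
    (hN : ∀ a ∈ f, a ∈ edgeVerts N) : ∃ g ∈ N, EvDom G g x := by
  rcases hfx with hxf | ⟨y, hyf, hyx⟩
  · obtain ⟨g, hg, hxg⟩ := hN x hxf
    exact ⟨g, hg, Or.inl hxg⟩
  · obtain ⟨g, hg, hyg⟩ := hN y hyf
    exact ⟨g, hg, Or.inr ⟨y, hyg, hyx⟩⟩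

lemma IsEvDomSet.isDomSet_edgeVerts (hM : IsEvDomSet G M) : IsDomSet G (edgeVerts M) := by
  intro v hv
  obtain ⟨e, he, hev⟩ := hM.2 v
  rcases hev with hve | ⟨u, hue, huv⟩
  · exact absurd ⟨e, he, hve⟩ hv
  · exact ⟨u, ⟨e, he, hue⟩, huv⟩

lemma IsEvDomSet.exchange {f g : Sym2 V} (hM : IsEvDomSet G M)
    (hg : g ∈ G.edgeSet) (hf : ∀ a ∈ f, a ∈ edgeVerts (insert g (M \ {f}))) :
    IsEvDomSet G (insert g (M \ {f})) := by
  refine ⟨Set.insert_subset hg (Set.sdiff_subset.trans hM.1), fun x => ?_⟩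
  obtain ⟨e, he, hex⟩ := hM.2 x
  by_cases hef : e = f
  · exact (hef ▸ hex).exists_of_forall_mem hf
  · exact ⟨e, Set.mem_insert_of_mem _ ⟨he, hef⟩, hex⟩

lemma IsMinEvDomSet.exchange {f g : Sym2 V} (hM : IsMinEvDomSet G M)
    (hfM : f ∈ M) (hg : g ∈ G.edgeSet) (hgM : g ∉ M)
    (hf : ∀ a ∈ f, a ∈ edgeVerts (insert g (M \ {f}))) :
    IsMinEvDomSet G (insert g (M \ {f})) :=
  ⟨hM.1.exchange hg hf, fun N hN => Set.ncard_exchange hgM hfM ▸ hM.2 N hN⟩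

lemma IsMinEvDomSet.exists_private [Finite V] (hM : IsMinEvDomSet G M)
    {f : Sym2 V} (hf : f ∈ M) : ∃ x, ∀ e ∈ M, e ≠ f → ¬ EvDom G e x := by
  by_contra! hcover
  have hle := hM.2 (M \ {f}) ⟨Set.sdiff_subset.trans hM.1.1,
    fun x => (hcover x).imp fun e ⟨he, hef, hex⟩ => ⟨⟨he, hef⟩, hex⟩⟩
  exact (Set.ncard_sdiff_singleton_lt_of_mem hf).not_ge hle

lemma exists_isMinEvDomSet [Finite V] (hG : NoIsolated G) : ∃ M, IsMinEvDomSet G M := by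
  have hcover : IsEvDomSet G G.edgeSet := ⟨subset_rfl, fun v => by
    obtain ⟨u, huv⟩ := hG v
    exact ⟨s(u, v), huv, Or.inl (Sym2.mem_mk_right u v)⟩⟩
  obtain ⟨M, hM, hcard⟩ := Nat.sInf_mem
    (⟨_, G.edgeSet, hcover, rfl⟩ : {n | ∃ M, IsEvDomSet G M ∧ M.ncard = n}.Nonempty)
  exact ⟨M, hM, fun N hN => hcard ▸ Nat.sInf_le ⟨N, hN, rfl⟩⟩

lemma IsMinEvDomSet.noSharedVertex [Finite V]
    (h : ∀ N : Set (Sym2 V), IsMinEvDomSet G N → edgeVerts N = D) (hM : IsMinEvDomSet G M) :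
    NoSharedVertex M := by
  intro e he f hf hef v hve hvf
  obtain ⟨x, hx⟩ := hM.exists_private hf
  have hex : ¬ EvDom G e x := hx e he hef
  have hxf : x ∉ f := fun hxf => hex (.of_mem_of_mem hve hvf (hM.1.1 hf) hxf)
  have hxM : x ∉ edgeVerts M := by
    rintro ⟨g, hg, hxg⟩
    by_cases hgf : g = f
    · exact hxf (hgf ▸ hxg)
    · exact hx g hg hgf (Or.inl hxg)
  obtain ⟨y, hyf, hyx⟩ : ∃ y ∈ f, G.Adj y x := by
    obtain ⟨g, hg, hgx⟩ := hM.1.2 x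
    obtain rfl : g = f := by_contra fun hgf => hx g hg hgf hgx
    exact hgx.resolve_left hxf
  have hye : y ∉ e := fun hye => hex (Or.inr ⟨y, hye, hyx⟩)
  obtain rfl : f = s(v, y) :=
    (Sym2.mem_and_mem_iff (ne_of_mem_of_not_mem hve hye)).1 ⟨hvf, hyf⟩
  -- Trading `f` for the edge `yx` keeps a minimum ev-dominating set but adds the vertex `x`.
  have hN : IsMinEvDomSet G (insert s(y, x) (M \ {s(v, y)})) := by
    refine hM.exchange hf hyx (fun hyxM => hx _ hyxM ?_ (Or.inl (Sym2.mem_mk_right y x))) ?_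
    · exact fun hyxf => hxf (hyxf ▸ Sym2.mem_mk_right y x)
    · intro a ha
      rcases Sym2.mem_iff.1 ha with rfl | rfl
      · exact ⟨e, Set.mem_insert_of_mem _ ⟨he, hef⟩, hve⟩
      · exact ⟨s(a, x), Set.mem_insert _ _, Sym2.mem_mk_left a x⟩
  exact hxM (h M hM ▸ h _ hN ▸ ⟨s(y, x), Set.mem_insert _ _, Sym2.mem_mk_right y x⟩)

lemma ncard_edgeVerts [Finite V] (hM : M ⊆ G.edgeSet) (hns : NoSharedVertex M) :
    (edgeVerts M).ncard = 2 * M.ncard := by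
  classical
  have hfin := M.toFinite
  have hverts : edgeVerts M = ↑(hfin.toFinset.biUnion Sym2.toFinset) := by
    ext v; simp [edgeVerts]
  have hdisj : (hfin.toFinset : Set (Sym2 V)).PairwiseDisjoint Sym2.toFinset := by
    intro e he f hf hef
    simp only [Set.Finite.coe_toFinset] at he hf
    exact Finset.disjoint_left.2 fun v hve hvf =>
      hns e he f hf hef v (Sym2.mem_toFinset.1 hve) (Sym2.mem_toFinset.1 hvf)
  rw [hverts, Set.ncard_coe_finset, Finset.card_biUnion hdisj, Set.ncard_eq_toFinset_card M hfin,
    Finset.sum_congr rfl fun e he => Sym2.card_toFinset_of_not_isDiag e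
      (G.not_isDiag_of_mem_edgeSet (hM ((Set.Finite.mem_toFinset hfin).1 he))),
    Finset.sum_const, smul_eq_mul, mul_comm]

lemma IsPMOn.edgeVerts_eq (h : IsPMOn G D M) : edgeVerts M = D := by
  ext v
  refine ⟨fun ⟨e, he, hve⟩ => h.2.1 e he v hve, fun hv => ?_⟩
  obtain ⟨e, ⟨he, hve⟩, -⟩ := h.2.2 v hv
  exact ⟨e, he, hve⟩

lemma IsPMOn.noSharedVertex (h : IsPMOn G D M) : NoSharedVertex M := by
  intro e he f hf hef v hve hvf
  obtain ⟨g, -, hg⟩ := h.2.2 v (h.2.1 e he v hve)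
  exact hef ((hg e ⟨he, hve⟩).trans (hg f ⟨hf, hvf⟩).symm)

lemma isPMOn_edgeVerts (hM : M ⊆ G.edgeSet) (hns : NoSharedVertex M) :
    IsPMOn G (edgeVerts M) M := by
  refine ⟨hM, fun e he v hve => ⟨e, he, hve⟩, fun v ⟨e, he, hve⟩ => ⟨e, ⟨he, hve⟩, ?_⟩⟩
  rintro f ⟨hf, hvf⟩
  by_contra hfe
  exact hns f hf e he hfe v hvf hve

lemma IsPMOn.isEvDomSet (hD : IsDomSet G D) (h : IsPMOn G D M) : IsEvDomSet G M := by
  refine ⟨h.1, fun v => ?_⟩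
  by_cases hv : v ∈ D
  · obtain ⟨e, ⟨he, hve⟩, -⟩ := h.2.2 v hv
    exact ⟨e, he, Or.inl hve⟩
  · obtain ⟨u, hu, huv⟩ := hD v hv
    obtain ⟨e, ⟨he, hue⟩, -⟩ := h.2.2 u hu
    exact ⟨e, he, Or.inr ⟨u, hue, huv⟩⟩

lemma IsPairedDomSet.exists_isEvDomSet [Finite V] (hD : IsPairedDomSet G D) :
    ∃ M, IsEvDomSet G M ∧ edgeVerts M = D ∧ D.ncard = 2 * M.ncard := by
  obtain ⟨hdom, M, hM⟩ := hD
  refine ⟨M, hM.isEvDomSet hdom, hM.edgeVerts_eq, ?_⟩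
  rw [← hM.edgeVerts_eq, ncard_edgeVerts hM.1 hM.noSharedVertex]

end

theorem stmt5 [Fintype V] (G : SimpleGraph V) (hG : NoIsolated G) (D : Set V)
    (h : ∀ M : Set (Sym2 V), IsMinEvDomSet G M → edgeVerts M = D) :
    IsMinPairedDomSet G D ∧ ∀ D' : Set V, IsMinPairedDomSet G D' → D' = D := by
  obtain ⟨M, hM⟩ := exists_isMinEvDomSet hG
  have hns : NoSharedVertex M := hM.noSharedVertex h
  obtain rfl := h M hM
  have hpaired : IsPairedDomSet G (edgeVerts M) :=
    ⟨hM.1.isDomSet_edgeVerts, M, isPMOn_edgeVerts hM.1.1 hns⟩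
  have hcard : (edgeVerts M).ncard = 2 * M.ncard := ncard_edgeVerts hM.1.1 hns
  have hmin : IsMinPairedDomSet G (edgeVerts M) := by
    refine ⟨hpaired, fun D' hD' => ?_⟩
    obtain ⟨M', hM', -, hcard'⟩ := hD'.exists_isEvDomSet
    have := hM.2 M' hM'
    omega
  refine ⟨hmin, fun D' hD' => ?_⟩
  obtain ⟨M', hM', rfl, hcard'⟩ := hD'.1.exists_isEvDomSet
  have hle := hD'.2 _ hpaired
  exact h M' ⟨hM', fun N hN => by have := hM.2 N hN; omega⟩
end

section
/- If G is a finite simple graph with no isolated vertex, then 2·γ_ev(G) ≤ γ_pr(G). -/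
open SimpleGraph

variable {V : Type*}

/-! If `D` is a minimum paired-dominating set and `M` a perfect matching of `G[D]`, every
vertex lies in `D` or has a neighbour in `D`, so it is ev-dominated by the edge of `M` through
that vertex of `D`. Hence `γ_ev(G) ≤ |M| = |D| / 2 = γ_pr(G) / 2`. The minimum exists because
the endpoints of a maximal matching form a paired-dominating set once no vertex is isolated. -/

lemma Sym2.ncard_coe_of_not_isDiag {e : Sym2 V} (he : ¬ e.IsDiag) : (e : Set V).ncard = 2 := by
  induction e using Sym2.ind with
  | _ a b => simpa using Set.ncard_pair (by simpa using he)

lemma edgeVerts_eq_biUnion (M : Set (Sym2 V)) : edgeVerts M = ⋃ e ∈ M, (e : Set V) := by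
  ext v
  simp [edgeVerts]

lemma NoSharedVertex.ncard_edgeVerts {M : Set (Sym2 V)} (hM : M.Finite)
    (hdiag : ∀ e ∈ M, ¬ e.IsDiag) (h : NoSharedVertex M) :
    (edgeVerts M).ncard = 2 * M.ncard := by
  have hdisj : M.PairwiseDisjoint ((↑) : Sym2 V → Set V) :=
    fun e he f hf hef => Set.disjoint_left.mpr fun v hve hvf => h e he f hf hef v hve hvf
  have hcard (e) (he : e ∈ M) : (e : Set V).ncard = 2 :=
    Sym2.ncard_coe_of_not_isDiag (hdiag e he)
  rw [edgeVerts_eq_biUnion,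
    hM.ncard_biUnion (fun e he => Set.finite_of_ncard_ne_zero (by simp [hcard e he])) hdisj,
    finsum_mem_congr rfl hcard, ← finsum_one, mul_finsum_mem]
  simp only [mul_one]

namespace IsPMOn

variable {G : SimpleGraph V} {D : Set V} {M : Set (Sym2 V)}

lemma noSharedVertex_s13 (hM : IsPMOn G D M) : NoSharedVertex M := by
  intro e he f hf hef v hve hvf
  obtain ⟨g, -, hg⟩ := hM.2.2 v (hM.2.1 e he v hve)
  exact hef ((hg e ⟨he, hve⟩).trans (hg f ⟨hf, hvf⟩).symm)

lemma edgeVerts_eq_s13 (hM : IsPMOn G D M) : edgeVerts M = D := by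
  ext v
  constructor
  · rintro ⟨e, he, hve⟩
    exact hM.2.1 e he v hve
  · intro hv
    obtain ⟨e, ⟨he, hve⟩, -⟩ := hM.2.2 v hv
    exact ⟨e, he, hve⟩

lemma ncard_eq_two_mul [Finite V] (hM : IsPMOn G D M) : D.ncard = 2 * M.ncard := by
  rw [← hM.edgeVerts_eq_s13]
  exact hM.noSharedVertex_s13.ncard_edgeVerts M.toFinite
    (fun e he => G.not_isDiag_of_mem_edgeSet (hM.1 he))

lemma isEvDomSet_s13 (hM : IsPMOn G D M) (hD : IsDomSet G D) : IsEvDomSet G M := by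
  refine ⟨hM.1, fun v => ?_⟩
  by_cases hv : v ∈ D
  · obtain ⟨e, ⟨he, hve⟩, -⟩ := hM.2.2 v hv
    exact ⟨e, he, Or.inl hve⟩
  · obtain ⟨u, hu, huv⟩ := hD v hv
    obtain ⟨e, ⟨he, hue⟩, -⟩ := hM.2.2 u hu
    exact ⟨e, he, Or.inr ⟨u, hue, huv⟩⟩

end IsPMOn

namespace NoSharedVertex

variable {M : Set (Sym2 V)}

lemma isPMOn_edgeVerts {G : SimpleGraph V} (h : NoSharedVertex M) (hMG : M ⊆ G.edgeSet) :
    IsPMOn G (edgeVerts M) M := by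
  refine ⟨hMG, fun e he v hv => ⟨e, he, hv⟩, ?_⟩
  rintro v ⟨e, he, hve⟩
  refine ⟨e, ⟨he, hve⟩, fun f ⟨hf, hvf⟩ => ?_⟩
  by_contra hfe
  exact h f hf e he hfe v hvf hve

lemma insert (h : NoSharedVertex M) {e : Sym2 V} (he : ∀ v ∈ e, v ∉ edgeVerts M) :
    NoSharedVertex (insert e M) := by
  rintro f (rfl | hf) g (rfl | hg) hfg v hvf hvg
  · exact hfg rfl
  · exact he v hvf ⟨g, hg, hvg⟩
  · exact he v hvg ⟨f, hf, hvf⟩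
  · exact h f hf g hg hfg v hvf hvg

end NoSharedVertex

lemma exists_isPairedDomSet [Finite V] {G : SimpleGraph V} (hG : NoIsolated G) :
    ∃ D, IsPairedDomSet G D := by
  obtain ⟨M, hmax⟩ :=
    (Set.toFinite {M : Set (Sym2 V) | M ⊆ G.edgeSet ∧ NoSharedVertex M}).exists_maximal
      ⟨∅, Set.empty_subset _, by simp [NoSharedVertex]⟩
  obtain ⟨hMG, hM⟩ := hmax.prop
  refine ⟨edgeVerts M, fun v hv => ?_, M, hM.isPMOn_edgeVerts hMG⟩
  by_contra! hfar
  obtain ⟨u, huv⟩ := hG v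
  have hu : u ∉ edgeVerts M := fun hu => hfar u hu huv
  have hnew : s(u, v) ∉ M := fun h => hv ⟨s(u, v), h, Sym2.mem_mk_right u v⟩
  have hext : insert s(u, v) M ⊆ G.edgeSet ∧ NoSharedVertex (insert s(u, v) M) :=
    ⟨Set.insert_subset huv hMG, hM.insert fun w hw => by
      rcases Sym2.mem_iff.mp hw with rfl | rfl <;> assumption⟩
  exact hnew (hmax.eq_of_subset hext (Set.subset_insert _ _) ▸ Set.mem_insert _ _)

theorem stmt13 [Fintype V] (G : SimpleGraph V) (hG : NoIsolated G) :
    2 * evNum G ≤ prNum G := by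
  obtain ⟨D₀, hD₀⟩ := exists_isPairedDomSet hG
  obtain ⟨D, ⟨hdom, M, hM⟩, hcard⟩ : prNum G ∈ {n | ∃ D, IsPairedDomSet G D ∧ D.ncard = n} :=
    Nat.sInf_mem ⟨D₀.ncard, D₀, hD₀, rfl⟩
  have hev : evNum G ≤ M.ncard := Nat.sInf_le ⟨M, hM.isEvDomSet_s13 hdom, rfl⟩
  rw [← hcard, hM.ncard_eq_two_mul]
  exact Nat.mul_le_mul_left 2 hev
end
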